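/- Let (X,d) be a finite metric space and h a chaining functional of log-concave type. Then γ*_h(X) ≤ Ent_h(X) ≤ 2·γ*_h(X) + diam(X)/e. -/

import Mathlib

open MeasureTheory

noncomputable section

/-- `f` is log-concave on `[0,∞)`. -/
def IsLogConcaveOn (f : ℝ → ℝ) : Prop :=
  ∀ x ∈ Set.Ici (0:ℝ), ∀ y ∈ Set.Ici (0:ℝ), ∀ t ∈ Set.Icc (0:ℝ) 1,
    f x ^ t * f y ^ (1 - t) ≤ f (t * x + (1 - t) * y)

/-- `f` is a continuous, non-increasing, log-concave probability density on `[0,∞)`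
normalized so that `f 0 = 1`. -/
structure IsChainingDensity (f : ℝ → ℝ) : Prop where
  nonneg : ∀ t : ℝ, 0 ≤ t → 0 ≤ f t
  continuousOn : ContinuousOn f (Set.Ici 0)
  antitoneOn : AntitoneOn f (Set.Ici 0)
  logConcave : IsLogConcaveOn f
  total : (∫ t in Set.Ioi (0:ℝ), f t) = 1
  normalized : f 0 = 1

/-- The complementary cumulative distribution function `F(s) = ∫_s^∞ f(t) dt`. -/
def ccdf (f : ℝ → ℝ) (s : ℝ) : ℝ := ∫ t in Set.Ioi s, f t

/-- The chaining functional `h(p) = F⁻¹(p)`, defined on `(0,1]` as the least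
`s ≥ 0` with `F(s) ≤ p`. -/
def chainFn (f : ℝ → ℝ) (p : ℝ) : ℝ := sInf {s : ℝ | 0 ≤ s ∧ ccdf f s ≤ p}

open scoped ENNReal

/-- The extended (`[0,∞]`-valued) chaining functional: `h(p)` is the least `s ≥ 0`
with `F(s) ≤ p`, and `+∞` when no such `s` exists (in particular
`h(0) = lim_{p→0⁺} h(p) ∈ (0,∞]`). -/
def chainFnE (f : ℝ → ℝ) (p : ℝ) : ℝ≥0∞ :=
  sInf {t : ℝ≥0∞ | ∃ s : ℝ, 0 ≤ s ∧ ccdf f s ≤ p ∧ t = ENNReal.ofReal s}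

/-- A probability measure on a finite set, given by its point masses. -/
def IsProbOn {X : Type*} [Fintype X] (μ : X → ℝ) : Prop :=
  (∀ x, 0 ≤ μ x) ∧ (∑ x, μ x) = 1

/-- The mass `μ(B(x,r))` of the closed ball of radius `r` around `x`. -/
def ballMass {X : Type*} [MetricSpace X] [Fintype X] (μ : X → ℝ) (x : X) (r : ℝ) : ℝ :=
  ∑ y ∈ Finset.univ.filter (fun y => dist x y ≤ r), μ y

/-- `∫₀^∞ h(μ(B(x,r))) dr`, valued in `[0,∞]`. -/
def Hint {X : Type*} [MetricSpace X] [Fintype X] (f : ℝ → ℝ) (μ : X → ℝ) (x : X) : ℝ≥0∞ :=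
  ∫⁻ r in Set.Ioi (0:ℝ), chainFnE f (ballMass μ x r)

/-- The diameter of the finite metric space `X`. -/
def fdiam (X : Type*) [MetricSpace X] : ℝ := Metric.diam (Set.univ : Set X)

/-- The dual functional `γ*_h(X) = sup_ν inf_μ Σ_x ν(x)·∫₀^∞ h(μ(B(x,r))) dr`. -/
def gammaStar (X : Type*) [MetricSpace X] [Fintype X] (f : ℝ → ℝ) : ℝ≥0∞ :=
  ⨆ ν : {m : X → ℝ // IsProbOn m}, ⨅ μ : {m : X → ℝ // IsProbOn m},
    ∑ x, ENNReal.ofReal (ν.1 x) * Hint f μ.1 x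

/-- The entropic dual `Ent_h(X) = sup_ν Σ_x ν(x)·∫₀^∞ h(ν(B(x,r))) dr`. -/
def entDual (X : Type*) [MetricSpace X] [Fintype X] (f : ℝ → ℝ) : ℝ≥0∞ :=
  ⨆ ν : {m : X → ℝ // IsProbOn m}, ∑ x, ENNReal.ofReal (ν.1 x) * Hint f ν.1 x

/-!
Log-concavity of `f` makes the hazard rate `f / F` nondecreasing. Comparing with `u = 0` gives
`F ≤ f = -F'`, hence `F(s) ≤ e^{-s}`; in general it makes `F(s + u) / F(u)` nonincreasing in `u`,
hence `F(s + t) ≤ F(s) F(t)`. Dually `h(pq) ≤ h(p) + h(q)` and `h(p) ≤ -log p`, so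
`h(q) ≤ h(p) + p / (e q)` since `-log x ≤ 1 / (e x)`.

Take `p = μ(B(x, r))` and `q = ν(B(x, 2r))`. Since `ν(B(x, 2r)) ≥ ν(B(y, r))` whenever
`d(x, y) ≤ r`, the error terms `ν(x) p / (e q)` sum to at most `1 / e`, and the left side vanishes
once `2r ≥ diam X`. Integrating over `r` and substituting `r ↦ 2r` gives, for all `μ` and `ν`,
`Σ ν(x) ∫ h(ν(B(x, r))) dr ≤ 2 Σ ν(x) ∫ h(μ(B(x, r))) dr + diam X / e`; the lower bound is the
choice `μ = ν` in the infimum.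
-/

open Set

lemma ccdf_add_eq_integral {f : ℝ → ℝ} (s u : ℝ) :
    ccdf f (s + u) = ∫ t in Ioi u, f (s + t) := by
  rw [ccdf, ← (measurePreserving_add_left volume s).setIntegral_preimage_emb
    (measurableEmbedding_addLeft s) f, preimage_const_add_Ioi, add_sub_cancel_left]

lemma IsLogConcaveOn.mul_le_mul_of_add_eq {f : ℝ → ℝ} (hlc : IsLogConcaveOn f)
    (hnn : ∀ t, 0 ≤ t → 0 ≤ f t) {a b c d : ℝ} (ha : 0 ≤ a) (hab : a ≤ b) (hac : a ≤ c)
    (hsum : a + d = b + c) : f a * f d ≤ f b * f c := by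
  have hb : 0 ≤ b := ha.trans hab
  have hc : 0 ≤ c := ha.trans hac
  have hd : 0 ≤ d := by linarith
  rcases (show a ≤ d by linarith).eq_or_lt with rfl | had
  · obtain rfl : b = a := by linarith
    obtain rfl : c = b := by linarith
    rfl
  -- `b` and `c` are the convex combinations of `a` and `d` with swapped weights `t`, `1 - t`.
  set t := (d - b) / (d - a)
  have ht : t ∈ Icc (0 : ℝ) 1 :=
    ⟨div_nonneg (by linarith) (by linarith), (div_le_one (by linarith)).2 (by linarith)⟩
  have htd : t * (d - a) = d - b := div_mul_cancel₀ _ (by linarith)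
  clear_value t
  have hfb : f a ^ t * f d ^ (1 - t) ≤ f b := by
    convert hlc a ha d hd t ht using 2; linear_combination htd
  have hfc : f a ^ (1 - t) * f d ^ t ≤ f c := by
    rw [mul_comm]; convert hlc d hd a ha t ht using 2; linear_combination -htd - hsum
  calc f a * f d = (f a ^ t * f a ^ (1 - t)) * (f d ^ (1 - t) * f d ^ t) := by
        rw [← Real.rpow_add' (hnn a ha) (by norm_num), ← Real.rpow_add' (hnn d hd) (by norm_num)]
        norm_num
    _ = (f a ^ t * f d ^ (1 - t)) * (f a ^ (1 - t) * f d ^ t) := by ring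
    _ ≤ f b * f c := mul_le_mul hfb hfc (by have := hnn a ha; have := hnn d hd; positivity)
        (hnn b hb)

namespace IsChainingDensity

variable {f : ℝ → ℝ}

lemma integrableOn_Ioi (hf : IsChainingDensity f) {s : ℝ} (hs : 0 ≤ s) :
    IntegrableOn f (Ioi s) := by
  refine IntegrableOn.mono_set ?_ (Ioi_subset_Ioi hs)
  by_contra h
  simpa [integral_undef h] using hf.total

lemma ccdf_zero (hf : IsChainingDensity f) : ccdf f 0 = 1 := hf.total

lemma ccdf_nonneg (hf : IsChainingDensity f) {s : ℝ} (hs : 0 ≤ s) : 0 ≤ ccdf f s :=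
  setIntegral_nonneg measurableSet_Ioi fun t ht => hf.nonneg t (hs.trans (le_of_lt ht))

lemma ccdf_eq_integral_Ioc_add (hf : IsChainingDensity f) {a b : ℝ} (ha : 0 ≤ a) (hab : a ≤ b) :
    ccdf f a = (∫ t in Ioc a b, f t) + ccdf f b := by
  rw [ccdf, ccdf, ← setIntegral_union (Ioc_disjoint_Ioi le_rfl) measurableSet_Ioi
    ((hf.integrableOn_Ioi ha).mono_set Ioc_subset_Ioi_self)
    (hf.integrableOn_Ioi (ha.trans hab)), Ioc_union_Ioi_eq_Ioi hab]

lemma ccdf_eq_one_sub (hf : IsChainingDensity f) {s : ℝ} (hs : 0 ≤ s) :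
    ccdf f s = 1 - ∫ t in Ioc 0 s, f t := by
  rw [eq_sub_iff_add_eq, add_comm, ← hf.ccdf_eq_integral_Ioc_add le_rfl hs, hf.ccdf_zero]

lemma ccdf_antitoneOn (hf : IsChainingDensity f) : AntitoneOn (ccdf f) (Ici 0) := by
  intro a ha b _ hab
  rw [hf.ccdf_eq_integral_Ioc_add ha hab, le_add_iff_nonneg_left]
  exact setIntegral_nonneg measurableSet_Ioc fun t ht => hf.nonneg t (ha.trans ht.1.le)

lemma continuousOn_ccdf (hf : IsChainingDensity f) (M : ℝ) : ContinuousOn (ccdf f) (Icc 0 M) := by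
  have hint : IntegrableOn f (Icc 0 M) := by
    rw [integrableOn_Icc_iff_integrableOn_Ioc]
    exact (hf.integrableOn_Ioi le_rfl).mono_set Ioc_subset_Ioi_self
  exact (continuousOn_const.sub (intervalIntegral.continuousOn_primitive hint)).congr
    fun s hs => hf.ccdf_eq_one_sub hs.1

lemma hasDerivAt_ccdf (hf : IsChainingDensity f) {s : ℝ} (hs : 0 < s) :
    HasDerivAt (ccdf f) (-f s) s := by
  have hint : IntervalIntegrable f volume 0 s := by
    rw [intervalIntegrable_iff_integrableOn_Ioc_of_le hs.le]
    exact (hf.integrableOn_Ioi le_rfl).mono_set Ioc_subset_Ioi_self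
  have hmeas : StronglyMeasurableAtFilter f (nhds s) :=
    ⟨Ioi 0, Ioi_mem_nhds hs, (hf.integrableOn_Ioi le_rfl).aestronglyMeasurable⟩
  have hcont : ContinuousAt f s :=
    hf.continuousOn.continuousAt (Ici_mem_nhds hs)
  refine ((intervalIntegral.integral_hasDerivAt_right hint hmeas hcont).const_sub 1)
    |>.congr_of_eventuallyEq ?_
  filter_upwards [Ioi_mem_nhds hs] with u hu
  rw [hf.ccdf_eq_one_sub hu.le, intervalIntegral.integral_of_le hu.le]

lemma integrableOn_comp_add (hf : IsChainingDensity f) {s u : ℝ} (hs : 0 ≤ s) (hu : 0 ≤ u) :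
    IntegrableOn (fun t => f (s + t)) (Ioi u) := by
  have := hf.integrableOn_Ioi (add_nonneg hs hu)
  rwa [← (measurePreserving_add_left volume s).integrableOn_comp_preimage
    (measurableEmbedding_addLeft s), preimage_const_add_Ioi, add_sub_cancel_left] at this

lemma mul_ccdf_add_le (hf : IsChainingDensity f) {s u : ℝ} (hs : 0 ≤ s) (hu : 0 ≤ u) :
    f u * ccdf f (s + u) ≤ f (s + u) * ccdf f u := by
  rw [ccdf_add_eq_integral, ccdf, ← integral_const_mul, ← integral_const_mul]
  refine setIntegral_mono_on ((hf.integrableOn_comp_add hs hu).const_mul _)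
    ((hf.integrableOn_Ioi hu).const_mul _) measurableSet_Ioi fun t ht => ?_
  exact hf.logConcave.mul_le_mul_of_add_eq hf.nonneg hu (by linarith) (le_of_lt ht) (by ring)

lemma ccdf_le (hf : IsChainingDensity f) {s : ℝ} (hs : 0 ≤ s) : ccdf f s ≤ f s := by
  simpa [hf.normalized, hf.ccdf_zero] using hf.mul_ccdf_add_le hs le_rfl

lemma ccdf_le_exp_neg (hf : IsChainingDensity f) {s : ℝ} (hs : 0 ≤ s) :
    ccdf f s ≤ Real.exp (-s) := by
  have hanti : AntitoneOn (fun u => Real.exp u * ccdf f u) (Icc 0 s) := by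
    refine antitoneOn_of_hasDerivWithinAt_nonpos (convex_Icc 0 s)
      (Real.continuous_exp.continuousOn.mul (hf.continuousOn_ccdf s))
      (f' := fun u => Real.exp u * ccdf f u + Real.exp u * -f u) (fun u hu => ?_) fun u hu => ?_
    · rw [interior_Icc] at hu
      exact ((Real.hasDerivAt_exp u).mul (hf.hasDerivAt_ccdf hu.1)).hasDerivWithinAt
    · rw [interior_Icc] at hu
      have := hf.ccdf_le hu.1.le
      have := Real.exp_pos u
      nlinarith
  have hs1 : Real.exp s * ccdf f s ≤ 1 := by
    simpa [hf.ccdf_zero] using hanti (left_mem_Icc.2 hs) (right_mem_Icc.2 hs) hs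
  calc ccdf f s = Real.exp (-s) * (Real.exp s * ccdf f s) := by
        rw [← mul_assoc, ← Real.exp_add, neg_add_cancel, Real.exp_zero, one_mul]
    _ ≤ Real.exp (-s) := mul_le_of_le_one_right (Real.exp_pos _).le hs1

lemma ccdf_add_le_mul (hf : IsChainingDensity f) {s t : ℝ} (hs : 0 ≤ s) (ht : 0 ≤ t) :
    ccdf f (s + t) ≤ ccdf f s * ccdf f t := by
  rcases (hf.ccdf_nonneg ht).eq_or_lt with h0 | h0
  · rw [← h0, mul_zero, h0]
    exact hf.ccdf_antitoneOn ht (add_nonneg hs ht) (le_add_of_nonneg_left hs)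
  have hpos : ∀ u ∈ Icc 0 t, 0 < ccdf f u :=
    fun u hu => h0.trans_le (hf.ccdf_antitoneOn hu.1 ht hu.2)
  have hanti : AntitoneOn (fun u => ccdf f (s + u) / ccdf f u) (Icc 0 t) := by
    refine antitoneOn_of_hasDerivWithinAt_nonpos (convex_Icc 0 t) ?_
      (f' := fun u => (-f (s + u) * ccdf f u - ccdf f (s + u) * -f u) / ccdf f u ^ 2)
      (fun u hu => ?_) fun u hu => ?_
    · refine ((hf.continuousOn_ccdf (s + t)).comp (continuousOn_const.add continuousOn_id)
        fun u hu => ⟨add_nonneg hs hu.1, add_le_add_right hu.2 s⟩).div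
        (hf.continuousOn_ccdf t) fun u hu => (hpos u hu).ne'
    · rw [interior_Icc] at hu
      exact (((hf.hasDerivAt_ccdf (by linarith [hu.1])).comp_const_add s u).div
        (hf.hasDerivAt_ccdf hu.1) (hpos u (Ioo_subset_Icc_self hu)).ne').hasDerivWithinAt
    · rw [interior_Icc] at hu
      have := hf.mul_ccdf_add_le hs hu.1.le
      exact div_nonpos_of_nonpos_of_nonneg (by linarith) (sq_nonneg _)
  have : ccdf f (s + t) / ccdf f t ≤ ccdf f (s + 0) / ccdf f 0 :=
    hanti (left_mem_Icc.2 ht) (right_mem_Icc.2 ht) ht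
  rwa [add_zero, hf.ccdf_zero, div_one, div_le_iff₀ h0] at this

end IsChainingDensity

lemma Real.neg_log_le_inv_div_exp_one {x : ℝ} (hx : 0 < x) : -Real.log x ≤ x⁻¹ / Real.exp 1 := by
  have := Real.log_le_sub_one_of_pos (show 0 < x⁻¹ / Real.exp 1 by positivity)
  rw [Real.log_div (inv_ne_zero hx.ne') (Real.exp_ne_zero 1), Real.log_inv, Real.log_exp] at this
  linarith

section chainFnE

variable {f : ℝ → ℝ}

lemma chainFnE_le_ofReal {p s : ℝ} (hs : 0 ≤ s) (h : ccdf f s ≤ p) :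
    chainFnE f p ≤ ENNReal.ofReal s :=
  sInf_le ⟨s, hs, h, rfl⟩

lemma chainFnE_antitone : Antitone (chainFnE f) :=
  fun _ _ hpq => sInf_le_sInf fun _ ⟨s, hs, hF, ht⟩ => ⟨s, hs, hF.trans hpq, ht⟩

namespace IsChainingDensity

lemma chainFnE_eq_zero_of_one_le (hf : IsChainingDensity f) {p : ℝ} (hp : 1 ≤ p) :
    chainFnE f p = 0 :=
  nonpos_iff_eq_zero.1 <| by
    simpa using chainFnE_le_ofReal le_rfl ((le_of_eq hf.ccdf_zero).trans hp)

lemma chainFnE_le_neg_log (hf : IsChainingDensity f) {p : ℝ} (hp : 0 < p) :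
    chainFnE f p ≤ ENNReal.ofReal (-Real.log p) := by
  rcases le_or_gt 1 p with h1 | h1
  · rw [hf.chainFnE_eq_zero_of_one_le h1]; exact zero_le
  have hlog : 0 ≤ -Real.log p := neg_nonneg.2 (Real.log_nonpos hp.le h1.le)
  refine chainFnE_le_ofReal hlog ?_
  simpa [Real.exp_log hp] using hf.ccdf_le_exp_neg hlog

lemma chainFnE_mul_le (hf : IsChainingDensity f) (p q : ℝ) :
    chainFnE f (p * q) ≤ chainFnE f p + chainFnE f q := by
  conv_rhs => rw [chainFnE, chainFnE, sInf_eq_iInf', sInf_eq_iInf']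
  refine ENNReal.le_iInf_add_iInf fun ⟨_, s₁, hs₁, hF₁, rfl⟩ ⟨_, s₂, hs₂, hF₂, rfl⟩ => ?_
  rw [← ENNReal.ofReal_add hs₁ hs₂]
  exact chainFnE_le_ofReal (add_nonneg hs₁ hs₂) ((hf.ccdf_add_le_mul hs₁ hs₂).trans
    (mul_le_mul hF₁ hF₂ (hf.ccdf_nonneg hs₂) ((hf.ccdf_nonneg hs₁).trans hF₁)))

lemma chainFnE_le_add (hf : IsChainingDensity f) {p q : ℝ} (hq : 0 < q) :
    chainFnE f q ≤ chainFnE f p + ENNReal.ofReal (p / q / Real.exp 1) := by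
  rcases le_or_gt p q with hpq | hqp
  · exact (chainFnE_antitone hpq).trans le_self_add
  have hp : 0 < p := hq.trans hqp
  calc chainFnE f q = chainFnE f (p * (q / p)) := by rw [mul_div_cancel₀ _ hp.ne']
    _ ≤ chainFnE f p + chainFnE f (q / p) := hf.chainFnE_mul_le p (q / p)
    _ ≤ chainFnE f p + ENNReal.ofReal (p / q / Real.exp 1) := by
        gcongr
        refine (hf.chainFnE_le_neg_log (div_pos hq hp)).trans (ENNReal.ofReal_le_ofReal ?_)
        simpa using Real.neg_log_le_inv_div_exp_one (div_pos hq hp)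

end IsChainingDensity

end chainFnE

section ballMass

variable {X : Type*} [MetricSpace X] [Fintype X] {μ ν : X → ℝ}

lemma ballMass_nonneg (hμ : ∀ x, 0 ≤ μ x) (x : X) (r : ℝ) : 0 ≤ ballMass μ x r :=
  Finset.sum_nonneg fun y _ => hμ y

lemma ballMass_monotone (hμ : ∀ x, 0 ≤ μ x) (x : X) : Monotone (ballMass μ x) :=
  fun _ _ hrr' => Finset.sum_le_sum_of_subset_of_nonneg
    (Finset.monotone_filter_right _ fun _ _ h => h.trans hrr') fun y _ _ => hμ y

lemma le_ballMass (hμ : ∀ x, 0 ≤ μ x) {x y : X} {r : ℝ} (hxy : dist x y ≤ r) :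
    μ y ≤ ballMass μ x r :=
  Finset.single_le_sum (fun z _ => hμ z) (Finset.mem_filter.2 ⟨Finset.mem_univ y, hxy⟩)

lemma ballMass_le_ballMass_two_mul (hν : ∀ x, 0 ≤ ν x) {x y : X} {r : ℝ} (hxy : dist x y ≤ r) :
    ballMass ν y r ≤ ballMass ν x (2 * r) := by
  refine Finset.sum_le_sum_of_subset_of_nonneg (fun z hz => ?_) fun z _ _ => hν z
  simp only [Finset.mem_filter, Finset.mem_univ, true_and] at hz ⊢
  linarith [dist_triangle x y z]

lemma ballMass_eq_one (hν : IsProbOn ν) (x : X) {r : ℝ} (hr : fdiam X ≤ r) :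
    ballMass ν x r = 1 := by
  rw [ballMass, Finset.filter_true_of_mem fun y _ => (Metric.dist_le_diam_of_mem
    Set.finite_univ.isBounded (mem_univ x) (mem_univ y)).trans hr]
  exact hν.2

-- Each `ν x * μ y` with `d(x, y) ≤ r` is divided by at least `ν(B(y, r))`; summing over `x` first
-- leaves at most `μ y`.
lemma sum_mul_ballMass_div_ballMass_two_mul_le_one (hμ : IsProbOn μ) (hν : IsProbOn ν) (r : ℝ) :
    ∑ x, ν x * ballMass μ x r / ballMass ν x (2 * r) ≤ 1 := by
  have hterm : ∀ x y, dist x y ≤ r →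
      ν x * μ y / ballMass ν x (2 * r) ≤ ν x * μ y / ballMass ν y r := by
    intro x y hxy
    rcases (hν.1 x).eq_or_lt with h0 | h0
    · simp [← h0]
    exact div_le_div_of_nonneg_left (mul_nonneg h0.le (hμ.1 y))
      (h0.trans_le (le_ballMass hν.1 (by rwa [dist_comm])))
      (ballMass_le_ballMass_two_mul hν.1 hxy)
  calc ∑ x, ν x * ballMass μ x r / ballMass ν x (2 * r)
      = ∑ x, ∑ y ∈ Finset.univ.filter (dist x · ≤ r), ν x * μ y / ballMass ν x (2 * r) := by
        simp only [ballMass, Finset.mul_sum, Finset.sum_div]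
    _ ≤ ∑ x, ∑ y ∈ Finset.univ.filter (dist x · ≤ r), ν x * μ y / ballMass ν y r :=
        Finset.sum_le_sum fun x _ => Finset.sum_le_sum fun y hy =>
          hterm x y (Finset.mem_filter.1 hy).2
    _ = ∑ y, ∑ x ∈ Finset.univ.filter (dist y · ≤ r), ν x * μ y / ballMass ν y r :=
        Finset.sum_comm' fun x y => by simp [dist_comm]
    _ = ∑ y, ballMass ν y r / ballMass ν y r * μ y := by
        simp only [ballMass, ← Finset.sum_div, ← Finset.sum_mul, mul_div_right_comm]
    _ ≤ ∑ y, μ y :=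
        Finset.sum_le_sum fun y _ => mul_le_of_le_one_left (hμ.1 y) (div_self_le_one _)
    _ = 1 := hμ.2

end ballMass

lemma lintegral_Ioi_zero_comp_mul_left (g : ℝ → ℝ≥0∞) {b : ℝ} (hb : 0 < b) :
    ∫⁻ r in Ioi 0, g (b * r) = ENNReal.ofReal b⁻¹ * ∫⁻ r in Ioi 0, g r := by
  have hpres : MeasurePreserving (b * ·) volume (ENNReal.ofReal |b⁻¹| • volume) :=
    ⟨measurable_const_mul b, Real.map_volume_mul_left hb.ne'⟩
  rw [← abs_of_pos (inv_pos.2 hb), ← smul_eq_mul, ← lintegral_smul_measure, ← Measure.restrict_smul,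
    ← hpres.setLIntegral_comp_preimage_emb (measurableEmbedding_mulLeft₀ hb.ne'),
    preimage_const_mul_Ioi₀ _ hb, zero_div]

section dual

variable {X : Type*} [MetricSpace X] [Fintype X] {f : ℝ → ℝ} {μ ν : X → ℝ}

lemma measurable_chainFnE_ballMass (hμ : ∀ x, 0 ≤ μ x) (x : X) :
    Measurable fun r => chainFnE f (ballMass μ x r) :=
  (chainFnE_antitone.comp_monotone (ballMass_monotone hμ x)).measurable

lemma sum_mul_Hint (w : X → ℝ) (hμ : ∀ x, 0 ≤ μ x) :
    ∑ x, ENNReal.ofReal (w x) * Hint f μ x =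
      ∫⁻ r in Ioi 0, ∑ x, ENNReal.ofReal (w x) * chainFnE f (ballMass μ x r) := by
  rw [lintegral_finsetSum _ fun x _ => (measurable_chainFnE_ballMass hμ x).const_mul _]
  exact Finset.sum_congr rfl fun x _ =>
    (lintegral_const_mul _ (measurable_chainFnE_ballMass hμ x)).symm

namespace IsChainingDensity

lemma sum_chainFnE_ballMass_eq_zero (hf : IsChainingDensity f) (hν : IsProbOn ν) (w : X → ℝ)
    {r : ℝ} (hr : fdiam X ≤ r) :
    ∑ x, ENNReal.ofReal (w x) * chainFnE f (ballMass ν x r) = 0 :=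
  Finset.sum_eq_zero fun x _ => by
    rw [ballMass_eq_one hν x hr, hf.chainFnE_eq_zero_of_one_le le_rfl, mul_zero]

lemma ofReal_mul_chainFnE_ballMass_two_mul_le (hf : IsChainingDensity f)
    (hν : ∀ x, 0 ≤ ν x) (x : X) {r : ℝ} (hr : 0 ≤ r) :
    ENNReal.ofReal (ν x) * chainFnE f (ballMass ν x (2 * r)) ≤
      ENNReal.ofReal (ν x) * chainFnE f (ballMass μ x r) +
        ENNReal.ofReal (ν x * ballMass μ x r / ballMass ν x (2 * r) / Real.exp 1) := by
  rcases (hν x).eq_or_lt with h0 | h0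
  · simp [← h0]
  have hq : 0 < ballMass ν x (2 * r) :=
    h0.trans_le (le_ballMass hν (by rw [dist_self]; positivity))
  calc ENNReal.ofReal (ν x) * chainFnE f (ballMass ν x (2 * r))
      ≤ ENNReal.ofReal (ν x) * (chainFnE f (ballMass μ x r) +
          ENNReal.ofReal (ballMass μ x r / ballMass ν x (2 * r) / Real.exp 1)) := by
        gcongr
        exact hf.chainFnE_le_add hq
    _ = _ := by rw [mul_add, ← ENNReal.ofReal_mul h0.le, mul_div_assoc, mul_div_assoc]

lemma sum_chainFnE_ballMass_two_mul_le (hf : IsChainingDensity f) (hμ : IsProbOn μ)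
    (hν : IsProbOn ν) {r : ℝ} (hr : 0 ≤ r) :
    ∑ x, ENNReal.ofReal (ν x) * chainFnE f (ballMass ν x (2 * r)) ≤
      ∑ x, ENNReal.ofReal (ν x) * chainFnE f (ballMass μ x r) +
        ENNReal.ofReal (Real.exp 1)⁻¹ := by
  have hratio : ∀ x, 0 ≤ ν x * ballMass μ x r / ballMass ν x (2 * r) / Real.exp 1 := fun x => by
    have := hν.1 x; have := ballMass_nonneg hμ.1 x r; have := ballMass_nonneg hν.1 x (2 * r)
    positivity
  calc ∑ x, ENNReal.ofReal (ν x) * chainFnE f (ballMass ν x (2 * r))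
      ≤ ∑ x, (ENNReal.ofReal (ν x) * chainFnE f (ballMass μ x r) +
          ENNReal.ofReal (ν x * ballMass μ x r / ballMass ν x (2 * r) / Real.exp 1)) :=
        Finset.sum_le_sum fun x _ => hf.ofReal_mul_chainFnE_ballMass_two_mul_le (μ := μ) hν.1 x hr
    _ = ∑ x, ENNReal.ofReal (ν x) * chainFnE f (ballMass μ x r) + ENNReal.ofReal
          ((∑ x, ν x * ballMass μ x r / ballMass ν x (2 * r)) * (Real.exp 1)⁻¹) := by
        rw [Finset.sum_add_distrib, ← ENNReal.ofReal_sum_of_nonneg fun x _ => hratio x,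
          Finset.sum_mul]
        simp only [div_eq_mul_inv]
    _ ≤ _ := by
        gcongr
        exact mul_le_of_le_one_left (by positivity)
          (sum_mul_ballMass_div_ballMass_two_mul_le_one hμ hν r)

lemma sum_mul_Hint_self_le (hf : IsChainingDensity f) (hμ : IsProbOn μ) (hν : IsProbOn ν) :
    ∑ x, ENNReal.ofReal (ν x) * Hint f ν x ≤
      2 * ∑ x, ENNReal.ofReal (ν x) * Hint f μ x + ENNReal.ofReal (fdiam X / Real.exp 1) := by
  set E : ℝ → ℝ≥0∞ := fun r => ∑ x, ENNReal.ofReal (ν x) * chainFnE f (ballMass ν x r)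
  set G : ℝ → ℝ≥0∞ := fun r => ∑ x, ENNReal.ofReal (ν x) * chainFnE f (ballMass μ x r)
  set c : ℝ≥0∞ := ENNReal.ofReal (Real.exp 1)⁻¹
  have hpt : ∀ r ∈ Ioi (0 : ℝ),
      E (2 * r) ≤ G r + (Ioo 0 (fdiam X / 2)).indicator (fun _ => c) r := by
    intro r hr
    by_cases hD : r < fdiam X / 2
    · rw [indicator_of_mem (show r ∈ Ioo 0 (fdiam X / 2) from ⟨hr, hD⟩)]
      exact hf.sum_chainFnE_ballMass_two_mul_le hμ hν (le_of_lt hr)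
    · exact (hf.sum_chainFnE_ballMass_eq_zero hν ν (by linarith)).trans_le zero_le
  calc ∑ x, ENNReal.ofReal (ν x) * Hint f ν x
      = 2 * ∫⁻ r in Ioi 0, E (2 * r) := by
        rw [sum_mul_Hint ν hν.1, lintegral_Ioi_zero_comp_mul_left E two_pos, ← mul_assoc,
          ENNReal.ofReal_inv_of_pos two_pos, ENNReal.ofReal_ofNat,
          ENNReal.mul_inv_cancel two_ne_zero ENNReal.ofNat_ne_top, one_mul]
    _ ≤ 2 * ∫⁻ r in Ioi 0, (G r + (Ioo 0 (fdiam X / 2)).indicator (fun _ => c) r) := by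
        gcongr 2 * ?_
        exact setLIntegral_mono' measurableSet_Ioi hpt
    _ = 2 * ((∫⁻ r in Ioi 0, G r) + c * ENNReal.ofReal (fdiam X / 2)) := by
        rw [lintegral_add_right _ (measurable_const.indicator measurableSet_Ioo),
          lintegral_indicator measurableSet_Ioo, Measure.restrict_restrict measurableSet_Ioo,
          inter_eq_left.2 Ioo_subset_Ioi_self, setLIntegral_const, Real.volume_Ioo, sub_zero]
    _ = _ := by
        rw [sum_mul_Hint ν hμ.1, mul_add, ← ENNReal.ofReal_mul (by positivity),
          ← ENNReal.ofReal_ofNat 2, ← ENNReal.ofReal_mul zero_le_two]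
        congr 2
        field_simp

end IsChainingDensity

end dual

theorem stmt4_general {X : Type*} [MetricSpace X] [Fintype X]
    (f : ℝ → ℝ) (hf : IsChainingDensity f) :
    gammaStar X f ≤ entDual X f ∧
    entDual X f ≤ 2 * gammaStar X f + ENNReal.ofReal (fdiam X / Real.exp 1) := by
  refine ⟨iSup_mono fun ν => iInf_le _ ν, iSup_le fun ν => ?_⟩
  calc ∑ x, ENNReal.ofReal (ν.1 x) * Hint f ν.1 x
      ≤ ⨅ μ : {m : X → ℝ // IsProbOn m},
          (2 * ∑ x, ENNReal.ofReal (ν.1 x) * Hint f μ.1 x +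
            ENNReal.ofReal (fdiam X / Real.exp 1)) :=
        le_iInf fun μ => hf.sum_mul_Hint_self_le μ.2 ν.2
    _ = 2 * (⨅ μ : {m : X → ℝ // IsProbOn m}, ∑ x, ENNReal.ofReal (ν.1 x) * Hint f μ.1 x) +
          ENNReal.ofReal (fdiam X / Real.exp 1) := by
        rw [ENNReal.mul_iInf_of_ne two_ne_zero ENNReal.ofNat_ne_top, ENNReal.iInf_add]
    _ ≤ 2 * gammaStar X f + ENNReal.ofReal (fdiam X / Real.exp 1) := by
        gcongr
        exact le_iSup_of_le ν le_rfl

/-- `γ*_h(X) ≤ Ent_h(X) ≤ 2·γ*_h(X) + diam(X)/e`. -/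
theorem stmt4 {X : Type*} [MetricSpace X] [Fintype X] [Nonempty X]
    (f : ℝ → ℝ) (hf : IsChainingDensity f) :
    gammaStar X f ≤ entDual X f ∧
    entDual X f ≤ 2 * gammaStar X f + ENNReal.ofReal (fdiam X / Real.exp 1) :=
  stmt4_general f hf
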